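/- arXiv:1811.00447 — 9 statements merged into one kernel-verified Lean document; each statement's English description precedes it below -/
import Mathlib

section
/- Let B be a unital complex C*-algebra containing a dimension-drop system (s, f_{j,k}) of size n, and set b = s*s + ∑_{j=1}^n f_{j,1} s s* f_{1,j}. Then: (i) b is a positive element of norm at most 1; (ii) b commutes with f_{j,k} for all 1 ≤ j,k ≤ n; (iii) b commutes with s; and (iv) s b = b s = s s* s. -/
/-! Write `p = ∑ j, f j j` and `c = ∑ j, f j 0 * (s * s*) * f 0 j`, so that `b = 1 - p + c`
by (R4). Relation (R2) makes `p` commute with every `f j k`, and `c` does too because `s * s*`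
is absorbed by `f 0 0` on both sides. Since `p` acts as the identity on every `f j 0 * s`, the
element `s* s` annihilates it; the C*-identity then gives `s * f j 0 * s = 0`, which yields
`s b = s s* s`, and `f 0 j * s = δ_{j0} s` gives `b s = s s* s`. Finally
`c ≤ ∑ j, f j j * f j j = p²` and `p² ≤ p` because `p` and `1 - p = s* s` are commuting
positive elements, whence `b ≤ 1`. -/

/-- A *dimension-drop system* of size `n` in a unital C*-algebra `B`: elements `s` and
`f j k` (for `j k : Fin n`, where the index `0` plays the role of `1` in the paper) of norm
at most one satisfying the relations (R1)–(R4). -/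
def IsDimDropSystem {B : Type*} [CStarAlgebra B] {n : ℕ} [NeZero n]
    (s : B) (f : Fin n → Fin n → B) : Prop :=
  ‖s‖ ≤ 1 ∧ (∀ j k, ‖f j k‖ ≤ 1) ∧
    (∀ j k, star (f j k) = f k j) ∧
    (∀ j k l m, f j k * f l m = if k = l then f j j * f j m else 0) ∧
    f 0 0 * s = s ∧
    (∑ j, f j j) + star s * s = 1

section CStarAlgebra

variable {A : Type*} [CStarAlgebra A] [PartialOrder A] [StarOrderedRing A]

theorem star_mul_self_le_one_of_norm_le_one {a : A} (ha : ‖a‖ ≤ 1) : star a * a ≤ 1 := by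
  rw [← CStarAlgebra.norm_le_one_iff_of_nonneg _ (star_mul_self_nonneg a),
    CStarRing.norm_star_mul_self]
  exact mul_le_one₀ ha (norm_nonneg a) ha

theorem mul_star_self_le_one_of_norm_le_one {a : A} (ha : ‖a‖ ≤ 1) : a * star a ≤ 1 := by
  simpa only [star_star] using
    star_mul_self_le_one_of_norm_le_one (a := star a) (by rwa [norm_star])

end CStarAlgebra

namespace IsDimDropSystem

variable {B : Type*} [CStarAlgebra B] {n : ℕ} [NeZero n] {s : B} {f : Fin n → Fin n → B}

theorem star_f (h : IsDimDropSystem s f) (j k : Fin n) : star (f j k) = f k j :=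
  h.2.2.1 j k

theorem f_mul_f_of_ne (h : IsDimDropSystem s f) (j : Fin n) {k l : Fin n} (hkl : k ≠ l)
    (m : Fin n) : f j k * f l m = 0 := by
  rw [h.2.2.2.1, if_neg hkl]

theorem f_mul_f_self (h : IsDimDropSystem s f) (j k m : Fin n) :
    f j k * f k m = f j j * f j m := by
  rw [h.2.2.2.1, if_pos rfl]

theorem f_zero_zero_mul_s (h : IsDimDropSystem s f) : f 0 0 * s = s :=
  h.2.2.2.2.1

theorem star_s_mul_s (h : IsDimDropSystem s f) : star s * s = 1 - ∑ i, f i i :=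
  eq_sub_of_add_eq' h.2.2.2.2.2

theorem sum_diag_mul_f (h : IsDimDropSystem s f) (j k : Fin n) :
    (∑ i, f i i) * f j k = f j j * f j k := by
  rw [Finset.sum_mul, Finset.sum_eq_single j (fun i _ hij ↦ h.f_mul_f_of_ne i hij k) (by simp)]

theorem f_mul_sum_diag (h : IsDimDropSystem s f) (j k : Fin n) :
    f j k * (∑ i, f i i) = f j j * f j k := by
  rw [Finset.mul_sum, Finset.sum_eq_single k (fun i _ hik ↦ h.f_mul_f_of_ne j (Ne.symm hik) i)
    (by simp), h.f_mul_f_self]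

theorem commute_sum_diag (h : IsDimDropSystem s f) (j k : Fin n) :
    Commute (∑ i, f i i) (f j k) :=
  (h.sum_diag_mul_f j k).trans (h.f_mul_sum_diag j k).symm

theorem sum_diag_mul_f_mul (h : IsDimDropSystem s f) {x : B} (hx : f 0 0 * x = x) (j : Fin n) :
    (∑ i, f i i) * (f j 0 * x) = f j 0 * x := by
  rw [← mul_assoc, h.sum_diag_mul_f, ← h.f_mul_f_self, mul_assoc, hx]

theorem sum_conj_mul_f (h : IsDimDropSystem s f) {x : B} (hx : x * f 0 0 = x) (j k : Fin n) :
    (∑ i, f i 0 * x * f 0 i) * f j k = f j 0 * x * f 0 k := by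
  rw [Finset.sum_mul, Finset.sum_eq_single j
    (fun i _ hij ↦ by rw [mul_assoc, h.f_mul_f_of_ne 0 hij k, mul_zero]) (by simp),
    mul_assoc, h.f_mul_f_self, ← mul_assoc, mul_assoc _ x, hx]

theorem f_mul_sum_conj (h : IsDimDropSystem s f) {x : B} (hx : f 0 0 * x = x) (j k : Fin n) :
    f j k * (∑ i, f i 0 * x * f 0 i) = f j 0 * x * f 0 k := by
  rw [Finset.mul_sum, Finset.sum_eq_single k
    (fun i _ hik ↦ by rw [← mul_assoc, ← mul_assoc, h.f_mul_f_of_ne j (Ne.symm hik) 0,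
      zero_mul, zero_mul]) (by simp),
    ← mul_assoc, ← mul_assoc, h.f_mul_f_self, ← h.f_mul_f_self, mul_assoc _ (f 0 0), hx]

theorem commute_sum_conj (h : IsDimDropSystem s f) {x : B} (hx : f 0 0 * x = x)
    (hx' : x * f 0 0 = x) (j k : Fin n) : Commute (∑ i, f i 0 * x * f 0 i) (f j k) :=
  (h.sum_conj_mul_f hx' j k).trans (h.f_mul_sum_conj hx j k).symm

theorem star_s_mul_s_mul_f_mul_s (h : IsDimDropSystem s f) (j : Fin n) :
    star s * s * (f j 0 * s) = 0 := by
  rw [h.star_s_mul_s, sub_mul, one_mul, h.sum_diag_mul_f_mul h.f_zero_zero_mul_s, sub_self]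

theorem star_s_mul_s_mul_s (h : IsDimDropSystem s f) : star s * s * s = 0 := by
  simpa only [h.f_zero_zero_mul_s] using h.star_s_mul_s_mul_f_mul_s 0

theorem s_mul_f_mul_s (h : IsDimDropSystem s f) (j : Fin n) : s * (f j 0 * s) = 0 := by
  rw [← CStarRing.star_mul_self_eq_zero_iff, star_mul, mul_assoc, ← mul_assoc (star s),
    h.star_s_mul_s_mul_f_mul_s, mul_zero]

theorem f_zero_mul_s_of_ne (h : IsDimDropSystem s f) {j : Fin n} (hj : j ≠ 0) :
    f 0 j * s = 0 := by
  calc f 0 j * s = f 0 j * f 0 0 * s := by rw [mul_assoc, h.f_zero_zero_mul_s]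
    _ = 0 := by rw [h.f_mul_f_of_ne 0 hj 0, zero_mul]

theorem s_mul_star_s_mul_f_zero_zero (h : IsDimDropSystem s f) :
    s * star s * f 0 0 = s * star s := by
  rw [mul_assoc, ← h.star_f, ← star_mul, h.f_zero_zero_mul_s]

theorem f_zero_zero_mul_s_mul_star_s (h : IsDimDropSystem s f) :
    f 0 0 * (s * star s) = s * star s := by
  rw [← mul_assoc, h.f_zero_zero_mul_s]

theorem sum_conj_mul_s (h : IsDimDropSystem s f) {x : B} (hx : f 0 0 * x = x) :
    (∑ i, f i 0 * x * f 0 i) * s = x * s := by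
  rw [Finset.sum_mul, Finset.sum_eq_single 0
    (fun i _ hi ↦ by rw [mul_assoc, h.f_zero_mul_s_of_ne hi, mul_zero]) (by simp),
    mul_assoc, h.f_zero_zero_mul_s, hx]

theorem s_mul_sum_conj (h : IsDimDropSystem s f) :
    s * ∑ i, f i 0 * (s * star s) * f 0 i = 0 := by
  rw [Finset.mul_sum]
  refine Finset.sum_eq_zero fun i _ ↦ ?_
  rw [← mul_assoc, ← mul_assoc, ← mul_assoc, mul_assoc s, h.s_mul_f_mul_s, zero_mul, zero_mul]

section Order

variable [PartialOrder B] [StarOrderedRing B]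

theorem sum_diag_nonneg (h : IsDimDropSystem s f) : 0 ≤ ∑ i, f i i := by
  rw [eq_sub_of_add_eq h.2.2.2.2.2]
  exact sub_nonneg.mpr (star_mul_self_le_one_of_norm_le_one h.1)

theorem sum_diag_mul_self_le (h : IsDimDropSystem s f) :
    (∑ i, f i i) * (∑ i, f i i) ≤ ∑ i, f i i := by
  have hcomm : Commute (∑ i, f i i) (star s * s) := by
    rw [h.star_s_mul_s]
    exact (Commute.one_right _).sub_right (Commute.refl _)
  have := hcomm.mul_nonneg h.sum_diag_nonneg (star_mul_self_nonneg s)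
  rwa [h.star_s_mul_s, mul_sub, mul_one, sub_nonneg] at this

theorem sum_conj_nonneg (h : IsDimDropSystem s f) {x : B} (hx : 0 ≤ x) :
    0 ≤ ∑ i, f i 0 * x * f 0 i :=
  Finset.sum_nonneg fun i _ ↦ by
    simpa only [h.star_f] using star_right_conjugate_nonneg hx (f i 0)

theorem sum_conj_le_sum_diag (h : IsDimDropSystem s f) {x : B} (hx : x ≤ 1) :
    ∑ i, f i 0 * x * f 0 i ≤ ∑ i, f i i :=
  calc ∑ i, f i 0 * x * f 0 i ≤ ∑ i, f i 0 * f 0 i := Finset.sum_le_sum fun i _ ↦ by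
        simpa only [h.star_f, mul_one] using star_right_conjugate_le_conjugate hx (f i 0)
    _ = (∑ i, f i i) * (∑ i, f i i) := by
        rw [Finset.mul_sum]
        exact Finset.sum_congr rfl fun i _ ↦ by rw [h.f_mul_f_self, h.sum_diag_mul_f]
    _ ≤ ∑ i, f i i := h.sum_diag_mul_self_le

end Order

end IsDimDropSystem

/-- for a dimension-drop system `(s, f)`, the element
`b = s*s + ∑ j, f j 0 * s * s* * f 0 j` is a positive contraction, is central for all the
`f j k` and for `s`, and satisfies `s b = b s = s s* s`. -/
theorem dimDropSystem_b_central {B : Type*} [CStarAlgebra B] [PartialOrder B]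
    [StarOrderedRing B] {n : ℕ} [NeZero n]
    (s : B) (f : Fin n → Fin n → B) (hsys : IsDimDropSystem s f)
    (b : B) (hb : b = star s * s + ∑ j, f j 0 * (s * star s) * f 0 j) :
    (0 ≤ b ∧ ‖b‖ ≤ 1) ∧
      (∀ j k, b * f j k = f j k * b) ∧
      (b * s = s * b) ∧
      (s * b = s * (star s * s) ∧ b * s = s * (star s * s)) := by
  have hx := hsys.f_zero_zero_mul_s_mul_star_s
  have hx' := hsys.s_mul_star_s_mul_f_zero_zero
  have hnonneg : 0 ≤ b := hb ▸
    add_nonneg (star_mul_self_nonneg s) (hsys.sum_conj_nonneg (mul_star_self_nonneg s))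
  have hle : b ≤ 1 := by
    rw [hb, hsys.star_s_mul_s]
    exact (add_le_add le_rfl (hsys.sum_conj_le_sum_diag
      (mul_star_self_le_one_of_norm_le_one hsys.1))).trans_eq (sub_add_cancel 1 _)
  have hbs : b * s = s * (star s * s) := by
    rw [hb, add_mul, hsys.star_s_mul_s_mul_s, zero_add, hsys.sum_conj_mul_s hx, mul_assoc]
  have hsb : s * b = s * (star s * s) := by
    rw [hb, mul_add, hsys.s_mul_sum_conj, add_zero]
  refine ⟨⟨hnonneg, (CStarAlgebra.norm_le_one_iff_of_nonneg b hnonneg).mpr hle⟩,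
    fun j k ↦ ?_, hbs.trans hsb.symm, hsb, hbs⟩
  rw [hb, hsys.star_s_mul_s]
  exact (((Commute.one_left _).sub_left (hsys.commute_sum_diag j k)).add_left
    (hsys.commute_sum_conj hx hx' j k)).eq
end

section
/- Let B be a unital complex C*-algebra containing a dimension-drop system (s, f_{j,k}) of size n, set b = s*s + ∑_{j=1}^n f_{j,1} s s* f_{1,j}, and assume b = 1. Define E_{j,k} = f_{j,1} s s* f_{1,k} for 1 ≤ j,k ≤ n, E_{j,n+1} = f_{j,1} s for 1 ≤ j ≤ n, E_{n+1,k} = s* f_{1,k} for 1 ≤ k ≤ n, and E_{n+1,n+1} = s*s. Then the family (E_{j,k})_{1 ≤ j,k ≤ n+1} is a system of matrix units: E_{j,k}* = E_{k,j}, E_{j,k} E_{l,m} = δ_{k,l} E_{j,m} for all 1 ≤ j,k,l,m ≤ n+1, and ∑_{j=1}^{n+1} E_{j,j} = 1. -/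
/-- if `b = s*s + ∑ j, f j 0 * s * s* * f 0 j` equals `1`, then the elements
`E j k` (indexed by `Fin (n+1)`, where `Fin.last n` plays the role of the index `n+1`) defined
by `E j k = f j 0 * s * s* * f 0 k`, `E j (n+1) = f j 0 * s`, `E (n+1) k = s* * f 0 k`, and
`E (n+1) (n+1) = s* * s`, form a system of matrix units. -/
theorem dimDropSystem_matrixUnits {B : Type*} [CStarAlgebra B] {n : ℕ} [NeZero n]
    (s : B) (f : Fin n → Fin n → B) (hsys : IsDimDropSystem s f)
    (hb : star s * s + ∑ j, f j 0 * (s * star s) * f 0 j = 1)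
    (E : Fin (n + 1) → Fin (n + 1) → B)
    (hE₁ : ∀ j k : Fin n, E j.castSucc k.castSucc = f j 0 * (s * star s) * f 0 k)
    (hE₂ : ∀ j : Fin n, E j.castSucc (Fin.last n) = f j 0 * s)
    (hE₃ : ∀ k : Fin n, E (Fin.last n) k.castSucc = star s * f 0 k)
    (hE₄ : E (Fin.last n) (Fin.last n) = star s * s) :
    (∀ j k, star (E j k) = E k j) ∧
      (∀ j k l m, E j k * E l m = if k = l then E j m else 0) ∧
      (∑ j, E j j) = 1 := by
  unfold IsDimDropSystem at hsys
  obtain ⟨-, -, hstar, hmul, hf00s, hsum⟩ := hsys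
  -- basic facts
  have h0s : ∀ j : Fin n, f 0 j * s = if j = 0 then s else 0 := by
    intro j
    by_cases hj : j = 0
    · subst hj; rw [if_pos rfl, hf00s]
    · rw [if_neg hj]
      conv_lhs => rw [← hf00s]
      rw [← mul_assoc, hmul, if_neg hj, zero_mul]
  have hdiag : ∀ j : Fin n, f j j * s = if j = 0 then s else 0 := by
    intro j
    by_cases hj : j = 0
    · subst hj; rw [if_pos rfl, hf00s]
    · rw [if_neg hj]
      conv_lhs => rw [← hf00s]
      rw [← mul_assoc, hmul, if_neg hj, zero_mul]
  have hsum_s : (∑ j, f j j) * s = s := by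
    rw [Finset.sum_mul]
    simp only [hdiag]
    simp
  have hts : star s * s * s = 0 := by
    have h := congrArg (· * s) hsum
    simp only [add_mul, one_mul, hsum_s] at h
    exact add_eq_left.mp h
  have hterm : ∀ j : Fin n,
      f j 0 * (s * star s) * f 0 j * s = if j = 0 then f 0 0 * (s * (star s * s)) else 0 := by
    intro j
    rw [mul_assoc, h0s j]
    split_ifs with hj
    · subst hj; rw [mul_assoc, mul_assoc]
    · rw [mul_zero]
  have hkey : f 0 0 * (s * (star s * s)) = s := by
    have h := congrArg (· * s) hb
    simp only [add_mul, one_mul, Finset.sum_mul] at h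
    rw [hts, zero_add] at h
    simp only [hterm] at h
    simpa using h
  have hst : s * (star s * s) = s := by
    calc s * (star s * s) = (f 0 0 * s) * (star s * s) := by rw [hf00s]
      _ = f 0 0 * (s * (star s * s)) := mul_assoc _ _ _
      _ = s := hkey
  have hsts : star s * (s * star s) = star s := by
    have h := congrArg star hst
    simpa only [star_mul, star_star, mul_assoc] using h
  have hps : s * star s * s = s := by rw [mul_assoc]; exact hst
  have hpp : (s * star s) * (s * star s) = s * star s := by rw [mul_assoc, hsts]
  have hf00p : f 0 0 * (s * star s) = s * star s := by rw [← mul_assoc, hf00s]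
  -- s * f k 0 * s = 0
  have hbz : ∑ j, s * (f j 0 * (s * star s) * f 0 j) = 0 := by
    have h := congrArg (s * ·) hb
    simp only [mul_add, mul_one, Finset.mul_sum] at h
    rw [hst] at h
    exact add_eq_left.mp h
  have hxx : ∑ j, (s * f j 0 * s) * star (s * f j 0 * s) = 0 := by
    have h := congrArg (· * star s) hbz
    simp only [Finset.sum_mul, zero_mul] at h
    calc ∑ j, (s * f j 0 * s) * star (s * f j 0 * s)
        = ∑ j, s * (f j 0 * (s * star s) * f 0 j) * star s :=
          Finset.sum_congr rfl fun j _ => by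
            simp only [star_mul, star_star, hstar, mul_assoc]
      _ = 0 := h
  have hsfs : ∀ k, s * f k 0 * s = 0 := by
    letI := CStarAlgebra.spectralOrder B
    haveI := CStarAlgebra.spectralOrderedRing B
    intro k
    have h0 : ∀ i ∈ Finset.univ, (0 : B) ≤ (s * f i 0 * s) * star (s * f i 0 * s) :=
      fun i _ => mul_star_self_nonneg _
    have h := (Finset.sum_eq_zero_iff_of_nonneg h0).mp hxx k (Finset.mem_univ k)
    exact (CStarRing.mul_star_self_eq_zero_iff _).mp h
  have hsfs' : ∀ k, star s * (f 0 k * star s) = 0 := by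
    intro k
    have h := congrArg star (hsfs k)
    simpa only [star_mul, star_star, hstar, star_zero, mul_assoc] using h
  -- middle products
  have hmidcc : ∀ k l : Fin n,
      f 0 k * (f l 0 * (s * star s)) = if k = l then s * star s else 0 := by
    intro k l
    rw [← mul_assoc, hmul]
    split_ifs with h
    · rw [mul_assoc, hf00p, hf00p]
    · exact zero_mul _
  have hmidlc : ∀ l : Fin n, s * (f l 0 * (s * star s)) = 0 := by
    intro l
    rw [← mul_assoc, ← mul_assoc, hsfs l, zero_mul]
  -- the factorization
  obtain ⟨L, hLc, hLl⟩ : ∃ L : Fin (n + 1) → B,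
      (∀ i : Fin n, L i.castSucc = f i 0 * (s * star s)) ∧ L (Fin.last n) = star s :=
    ⟨fun j => Fin.lastCases (star s) (fun i => f i 0 * (s * star s)) j,
      fun i => by simp, by simp⟩
  obtain ⟨R, hRc, hRl⟩ : ∃ R : Fin (n + 1) → B,
      (∀ i : Fin n, R i.castSucc = f 0 i) ∧ R (Fin.last n) = s :=
    ⟨fun k => Fin.lastCases s (fun i => f 0 i) k, fun i => by simp, by simp⟩
  have hfac : ∀ j k, E j k = L j * R k := by
    intro j k
    induction j using Fin.lastCases with
    | last =>
      induction k using Fin.lastCases with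
      | last => rw [hE₄, hLl, hRl]
      | cast k => rw [hE₃, hLl, hRc]
    | cast j =>
      induction k using Fin.lastCases with
      | last => rw [hE₂, hLc, hRl, mul_assoc, hps]
      | cast k => rw [hE₁, hLc, hRc]
  have hLp : ∀ j, L j * (s * star s) = L j := by
    intro j
    induction j using Fin.lastCases with
    | last => rw [hLl]; exact hsts
    | cast i => rw [hLc, mul_assoc, hpp]
  have hLz : ∀ (j : Fin (n + 1)) (k : Fin n), L j * (f 0 k * star s) = 0 := by
    intro j k
    induction j using Fin.lastCases with
    | last => rw [hLl]; exact hsfs' k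
    | cast i => rw [hLc, mul_assoc, mul_assoc, hsfs' k, mul_zero, mul_zero]
  refine ⟨?_, ?_, ?_⟩
  · -- star
    intro j k
    induction j using Fin.lastCases with
    | last =>
      induction k using Fin.lastCases with
      | last => rw [hE₄, star_mul, star_star]
      | cast k => rw [hE₃, hE₂, star_mul, hstar, star_star]
    | cast j =>
      induction k using Fin.lastCases with
      | last => rw [hE₂, hE₃, star_mul, hstar]
      | cast k =>
        rw [hE₁ j k, hE₁ k j]
        simp only [star_mul, star_star, hstar, mul_assoc]
  · -- products
    intro j k l m
    rw [hfac j k, hfac l m, hfac j m]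
    induction k using Fin.lastCases with
    | last =>
      induction l using Fin.lastCases with
      | last =>
        rw [if_pos rfl, hRl, hLl, mul_assoc, ← mul_assoc s, ← mul_assoc, hLp j]
      | cast l' =>
        rw [if_neg (Fin.castSucc_lt_last l').ne', hRl, hLc, mul_assoc, ← mul_assoc s,
          hmidlc l', zero_mul, mul_zero]
    | cast k' =>
      induction l using Fin.lastCases with
      | last =>
        rw [if_neg (Fin.castSucc_lt_last k').ne, hRc, hLl, mul_assoc,
          ← mul_assoc (f 0 k'), ← mul_assoc, hLz j k', zero_mul]
      | cast l' =>
        rcases eq_or_ne k' l' with rfl | hne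
        · rw [if_pos rfl, hRc, hLc, mul_assoc, ← mul_assoc (f 0 k'), hmidcc k' k',
            if_pos rfl, ← mul_assoc, hLp j]
        · rw [if_neg (fun h => hne (Fin.castSucc_inj.mp h)), hRc, hLc, mul_assoc,
            ← mul_assoc (f 0 k'), hmidcc k' l', if_neg hne, zero_mul, mul_zero]
  · -- sum
    rw [Fin.sum_univ_castSucc, hE₄]
    rw [Finset.sum_congr rfl fun i _ => hE₁ i i, add_comm]
    exact hb
end

section
/- Let B be a unital complex C*-algebra containing a dimension-drop system (s, f_{j,k}) of size n, set b = s*s + ∑_{j=1}^n f_{j,1} s s* f_{1,j}, and assume b = t·1 for some real t with 0 < t < 1. Define c_{j,k} = (t − t²)^{-1} s f_{1,j} s* f_{1,k} and d_l = (√t (1−t))^{-1} s f_{1,l} for 1 ≤ j,k,l ≤ n. Then: (i) s s* s = t s; (ii) s f_{1,1}² s* = (1−t) s f_{1,1} s*; (iii) c_{j,k} c_{l,m}* = δ_{j,l} δ_{k,m} c_{1,1} for all j,k,l,m; (iv) d_j d_k* = δ_{j,k} c_{1,1} for all j,k; (v) c_{j,k} d_l* = 0 and d_l c_{j,k}* =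 0 for all j,k,l. -/
/-- if `b = s*s + ∑ j, f j 0 * s * s* * f 0 j` equals `t • 1` for some
`0 < t < 1`, then with `c j k = (t - t²)⁻¹ • s * f 0 j * s* * f 0 k` and
`d l = (√t (1 - t))⁻¹ • s * f 0 l` one has the matrix-unit type relations (i)–(v). -/
theorem dimDropSystem_fiber_relations {B : Type*} [CStarAlgebra B] {n : ℕ} [NeZero n]
    (s : B) (f : Fin n → Fin n → B) (hsys : IsDimDropSystem s f)
    (t : ℝ) (ht0 : 0 < t) (ht1 : t < 1)
    (hb : star s * s + ∑ j, f j 0 * (s * star s) * f 0 j = (t : ℂ) • (1 : B))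
    (c : Fin n → Fin n → B) (d : Fin n → B)
    (hc : ∀ j k, c j k = (((t - t ^ 2 : ℝ) : ℂ))⁻¹ • (s * f 0 j * star s * f 0 k))
    (hd : ∀ l, d l = (((Real.sqrt t * (1 - t) : ℝ) : ℂ))⁻¹ • (s * f 0 l)) :
    (s * star s * s = (t : ℂ) • s) ∧
      (s * (f 0 0 * f 0 0) * star s = ((1 - t : ℝ) : ℂ) • (s * f 0 0 * star s)) ∧
      (∀ j k l m, c j k * star (c l m) = if j = l ∧ k = m then c 0 0 else 0) ∧
      (∀ j k, d j * star (d k) = if j = k then c 0 0 else 0) ∧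
      (∀ j k l, c j k * star (d l) = 0 ∧ d l * star (c j k) = 0) := by
  obtain ⟨-, -, hstar, hmul, hf00s, hsum⟩ := hsys
  have ctx : ∀ {a b cc : B}, a * b = cc → ∀ x : B, a * (b * x) = cc * x :=
    fun h x => by rw [← mul_assoc, h]
  -- star s * f 0 0 = star s
  have hsf00 : star s * f 0 0 = star s := by
    have h := congrArg star hf00s
    rwa [star_mul, hstar] at h
  have hf0j_s : ∀ j, f 0 j * s = if j = 0 then s else 0 := by
    intro j
    rw [← hf00s, ← mul_assoc, hmul 0 j 0 0]
    split_ifs with h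
    · rw [mul_assoc, hf00s, hf00s]
    · rw [zero_mul]
  have hfjj_s : ∀ j, f j j * s = if j = 0 then s else 0 := by
    intro j
    rw [← hf00s, ← mul_assoc, hmul j j 0 0]
    split_ifs with h
    · subst h; rw [mul_assoc, hf00s, hf00s]
    · rw [zero_mul]
  have hsumfs : (∑ j, f j j) * s = s := by
    rw [Finset.sum_mul]
    simp [hfjj_s]
  have hss' : star s * s = 1 - ∑ j, f j j := by
    rw [← hsum]; abel
  have key1 : star s * s * s = 0 := by
    rw [hss', sub_mul, one_mul, hsumfs, sub_self]
  -- (i)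
  have hi : s * star s * s = (t : ℂ) • s := by
    have h1 := congrArg (· * s) hb
    simp only [add_mul, key1, Finset.sum_mul, smul_mul_assoc, one_mul, zero_add] at h1
    have h2 : ∀ j, f j 0 * (s * star s) * f 0 j * s
        = if j = 0 then f 0 0 * (s * star s) * s else 0 := by
      intro j
      rw [mul_assoc, hf0j_s j]
      split_ifs with h
      · subst h; rfl
      · rw [mul_zero]
    simp only [h2, Finset.sum_ite_eq', Finset.mem_univ, if_true] at h1
    calc s * star s * s = f 0 0 * s * star s * s := by rw [hf00s]
      _ = f 0 0 * (s * star s) * s := by rw [mul_assoc (f 0 0)]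
      _ = (t:ℂ) • s := h1
  have hi' : star s * (s * star s) = (t : ℂ) • star s := by
    have h := congrArg star hi
    simpa [star_mul, star_smul, Complex.star_def, Complex.conj_ofReal, mul_assoc] using h
  have hf00sq : f 0 0 * f 0 0 = f 0 0 - f 0 0 * (star s * s) := by
    have hsum00 : ∑ j, f 0 0 * f j j = f 0 0 * f 0 0 :=
      Fintype.sum_eq_single (0 : Fin n)
        (fun j hj => by rw [hmul 0 0 j j, if_neg (fun h => hj h.symm)])
    have h : f 0 0 * (star s * s) = f 0 0 - f 0 0 * f 0 0 := by
      rw [hss', mul_sub, mul_one, Finset.mul_sum, hsum00]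
    rw [h]; abel
  -- (ii)
  have hii : s * (f 0 0 * f 0 0) * star s = ((1 - t : ℝ) : ℂ) • (s * f 0 0 * star s) := by
    rw [hf00sq, mul_sub, sub_mul]
    simp only [mul_assoc]
    rw [hi']
    simp [mul_smul_comm, sub_smul, Complex.ofReal_sub, one_smul, mul_assoc]
  have hiiA : s * (f 0 0 * (f 0 0 * star s)) = ((1 - t : ℝ) : ℂ) • (s * (f 0 0 * star s)) := by
    simpa only [mul_assoc] using hii
  have hf3A : s * (f 0 0 * (f 0 0 * (f 0 0 * star s)))
      = (((1 - t) ^ 2 : ℝ) : ℂ) • (s * (f 0 0 * star s)) := by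
    have e1 : f 0 0 * (f 0 0 * f 0 0) = f 0 0 * f 0 0 - f 0 0 * (f 0 0 * (star s * s)) := by
      conv_lhs => rw [hf00sq]
      rw [mul_sub]
    have e0 : s * (f 0 0 * (f 0 0 * (f 0 0 * star s))) = s * (f 0 0 * (f 0 0 * f 0 0)) * star s := by
      simp only [mul_assoc]
    rw [e0, e1, mul_sub, sub_mul]
    simp only [mul_assoc]
    rw [hi']
    simp only [mul_smul_comm]
    rw [hiiA, smul_smul, ← sub_smul]
    congr 1
    push_cast
    ring
  have hcore : ∀ j l, s * (f 0 j * (star s * (s * (f l 0 * star s))))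
      = if j = l then ((t - t ^ 2 : ℝ) : ℂ) • (s * (f 0 0 * star s)) else 0 := by
    intro j l
    have hsuml : ∑ m, f m m * (f l 0 * star s) = f l l * (f l 0 * star s) :=
      Fintype.sum_eq_single l
        (fun m hm => by rw [← mul_assoc, hmul m m l 0, if_neg hm, zero_mul])
    have e2 : star s * (s * (f l 0 * star s))
        = f l 0 * star s - f l l * (f l 0 * star s) := by
      rw [← mul_assoc, hss', sub_mul, one_mul, Finset.sum_mul, hsuml]
    rw [e2, mul_sub, mul_sub, ← mul_assoc (f 0 j) (f l 0), ← mul_assoc (f 0 j) (f l l),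
      hmul 0 j l 0, hmul 0 j l l]
    split_ifs with h
    · subst h
      rw [mul_assoc (f 0 0) (f 0 0), mul_assoc (f 0 0) (f 0 j),
        ← mul_assoc (f 0 j) (f j 0), hmul 0 j j 0, if_pos rfl]
      simp only [mul_assoc]
      rw [hiiA, hf3A, ← sub_smul]
      congr 1
      push_cast
      ring
    · simp
  have key1ctx : ∀ x : B, star s * (s * (s * x)) = 0 := fun x => by
    rw [← mul_assoc, ← mul_assoc, key1, zero_mul]
  have hf00sA : ∀ x : B, f 0 0 * (s * x) = s * x := ctx hf00s
  have hzero : ∀ j, s * (f 0 j * (star s * star s)) = 0 := by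
    intro j
    have hx : (s * (f 0 j * (star s * star s))) * star (s * (f 0 j * (star s * star s))) = 0 := by
      simp only [star_mul, star_star, hstar, mul_assoc]
      rw [key1ctx]
      simp
    exact (CStarRing.mul_star_self_eq_zero_iff _).mp hx
  have hzero' : ∀ j, s * (s * (f j 0 * star s)) = 0 := by
    intro j
    have h := congrArg star (hzero j)
    simpa only [star_mul, star_star, hstar, star_zero, mul_assoc] using h
  have hβ : (t - t ^ 2 : ℝ) ≠ 0 := by nlinarith
  have hβC : ((t - t ^ 2 : ℝ) : ℂ) ≠ 0 := Complex.ofReal_ne_zero.mpr hβ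
  have hc00 : c 0 0 = (((t - t ^ 2 : ℝ) : ℂ))⁻¹ • (s * (f 0 0 * star s)) := by
    rw [hc 0 0, mul_assoc (s * f 0 0), hsf00, mul_assoc]
  have hiii : ∀ j k l m, c j k * star (c l m) = if j = l ∧ k = m then c 0 0 else 0 := by
    intro j k l m
    rw [hc j k, hc l m, hc00]
    simp only [star_smul, star_mul, star_star, hstar, smul_mul_assoc, mul_smul_comm,
      smul_smul, Complex.star_def, map_inv₀, Complex.conj_ofReal, mul_assoc]
    rw [← mul_assoc (f 0 k) (f m 0), hmul 0 k m 0]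
    by_cases hkm : k = m
    · subst hkm
      rw [if_pos rfl, mul_assoc (f 0 0) (f 0 0), hf00sA, hf00sA, hcore j l]
      by_cases hjl : j = l
      · subst hjl
        rw [if_pos rfl, if_pos ⟨rfl, rfl⟩, smul_smul]
        congr 1
        field_simp
      · rw [if_neg hjl, if_neg (fun h => hjl h.1)]
        simp
    · rw [if_neg hkm, if_neg (fun h => hkm h.2)]
      simp
  have hsf00A : ∀ x : B, star s * (f 0 0 * x) = star s * x := ctx hsf00
  have h1t : (1 - t : ℝ) ≠ 0 := by linarith
  have hst : Real.sqrt t * Real.sqrt t = t := Real.mul_self_sqrt ht0.le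
  have hsqt : Real.sqrt t ≠ 0 := by positivity
  have hreal : (Real.sqrt t * (1 - t))⁻¹ * (Real.sqrt t * (1 - t))⁻¹ * (1 - t)
      = (t - t ^ 2)⁻¹ := by
    field_simp
    nlinarith [hst]
  have hiv : ∀ j k, d j * star (d k) = if j = k then c 0 0 else 0 := by
    intro j k
    rw [hd j, hd k, hc00]
    simp only [star_smul, star_mul, star_star, hstar, smul_mul_assoc, mul_smul_comm,
      smul_smul, Complex.star_def, map_inv₀, Complex.conj_ofReal, mul_assoc]
    rw [← mul_assoc (f 0 j) (f k 0), hmul 0 j k 0]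
    split_ifs with h
    · rw [mul_assoc (f 0 0) (f 0 0)]
      rw [show s * (f 0 0 * (f 0 0 * star s)) = ((1 - t : ℝ) : ℂ) • (s * (f 0 0 * star s))
        from hiiA, smul_smul]
      congr 1
      push_cast
      exact_mod_cast hreal
    · simp
  have hv : ∀ j k l, c j k * star (d l) = 0 ∧ d l * star (c j k) = 0 := by
    intro j k l
    constructor
    · rw [hc j k, hd l]
      simp only [star_smul, star_mul, star_star, hstar, smul_mul_assoc, mul_smul_comm,
        smul_smul, Complex.star_def, map_inv₀, Complex.conj_ofReal, mul_assoc]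
      rw [← mul_assoc (f 0 k) (f l 0), hmul 0 k l 0]
      split_ifs with h
      · rw [mul_assoc (f 0 0) (f 0 0), hsf00A, hsf00A, hzero j, smul_zero]
      · simp
    · rw [hc j k, hd l]
      simp only [star_smul, star_mul, star_star, hstar, smul_mul_assoc, mul_smul_comm,
        smul_smul, Complex.star_def, map_inv₀, Complex.conj_ofReal, mul_assoc]
      rw [← mul_assoc (f 0 l) (f k 0), hmul 0 l k 0]
      split_ifs with h
      · rw [mul_assoc (f 0 0) (f 0 0), hf00sA, hf00sA, hzero' j, smul_zero]
      · simp
  exact ⟨hi, hii, hiii, hiv, hv⟩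
end

section
/- Fix n ≥ 1. In the C*-algebra C([0,1], M_n(ℂ) ⊗ M_{n+1}(ℂ)) of continuous matrix-valued functions, the elements defined by ṽf_{j,k}(t) = e_{j,k} ⊗ (1_{n+1} − t·e_{n+1,n+1}) (1 ≤ j,k ≤ n) and ṽs(t) = √t · ∑_{i=1}^n e_{1,i} ⊗ e_{i,n+1} form a dimension-drop system of size n; that is, all have norm at most 1, ṽf_{j,k}* = ṽf_{k,j}, ṽf_{j,k} ṽf_{l,m} = δ_{k,l} ṽf_{j,j} ṽf_{j,m}, ṽf_{1,1} ṽs = ṽs, and ∑_{j=1}^n ṽf_{j,j} + ṽs*ṽs = 1. Moreover, ṽs*ṽs + ∑_{j=1}^n ṽf_{j,1} ṽs ṽs* ṽf_{1,j} equals the function t ↦ t·1. -/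
/-!
Write `E = e_{n+1,n+1}`, `D t = 1 - t • E` and `s = ∑ i, e_{1,i} ⊗ e_{i,n+1}`, so that
`ṽf j k t = e_{j,k} ⊗ D t` and `ṽs t = √t • s`. Since `i ↦ e_{i,n+1}` is injective on the first
`n` indices, `s* s = 1 ⊗ E` and `s s* = e_{1,1} ⊗ (1 - E)`; moreover `D t` is the identity on the
range of `1 - E`. Every identity then reduces to the multiplication rule of matrix units.
For the norms, `s` is a partial isometry, and
`e_{j,k} ⊗ D t = (1 - t) • (e_{j,k} ⊗ 1) + t • (e_{j,k} ⊗ (1 - E))`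
is a convex combination of partial isometries.
-/

open Matrix
open scoped Kronecker Matrix.Norms.L2Operator

/-- The function `ṽf j k : [0,1] → Mₙ(ℂ) ⊗ M_{n+1}(ℂ)`,
`ṽf j k (t) = e_{j,k} ⊗ (1_{n+1} - t • e_{n+1,n+1})`.  Indices in `Fin n` (resp. `Fin (n+1)`),
with `0` playing the role of the index `1` and `Fin.last n` the role of the index `n+1`. -/
noncomputable def vfMat (n : ℕ) (j k : Fin n) (t : ℝ) :
    Matrix (Fin n × Fin (n + 1)) (Fin n × Fin (n + 1)) ℂ :=
  (single j k (1 : ℂ)) ⊗ₖ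
    ((1 : Matrix (Fin (n + 1)) (Fin (n + 1)) ℂ) -
      (t : ℂ) • single (Fin.last n) (Fin.last n) (1 : ℂ))

/-- The function `ṽs : [0,1] → Mₙ(ℂ) ⊗ M_{n+1}(ℂ)`, `ṽs (t) = √t • ∑ i, e_{1,i} ⊗ e_{i,n+1}`. -/
noncomputable def vsMat (n : ℕ) [NeZero n] (t : ℝ) :
    Matrix (Fin n × Fin (n + 1)) (Fin n × Fin (n + 1)) ℂ :=
  ((Real.sqrt t : ℝ) : ℂ) • ∑ i : Fin n,
    (single (0 : Fin n) i (1 : ℂ)) ⊗ₖ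
      (single i.castSucc (Fin.last n) (1 : ℂ))

theorem norm_le_one_of_isStarProjection_star_mul_self {E : Type*} [NonUnitalNormedRing E]
    [StarRing E] [CStarRing E] {a : E} (h : IsStarProjection (star a * a)) : ‖a‖ ≤ 1 := by
  have := IsStarProjection.norm_le _ h
  rw [CStarRing.norm_star_mul_self] at this
  nlinarith [norm_nonneg a]

section OneSubSmul

variable {R A : Type*} [CommSemiring R] [Ring A] [StarRing A] [Algebra R A] {e : A}

theorem IsStarProjection.one_sub_smul_mul_one_sub (he : IsStarProjection e) (c : R) :
    (1 - c • e) * (1 - e) = 1 - e := by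
  rw [sub_mul, one_mul, smul_mul_assoc, he.mul_one_sub_self, smul_zero, sub_zero]

theorem IsStarProjection.one_sub_mul_one_sub_smul (he : IsStarProjection e) (c : R) :
    (1 - e) * (1 - c • e) = 1 - e := by
  rw [mul_sub, mul_one, mul_smul_comm, he.one_sub_mul_self, smul_zero, sub_zero]

end OneSubSmul

namespace Matrix

variable {ι l m n p κ α : Type*}

theorem sum_kronecker [NonUnitalNonAssocSemiring α] (s : Finset ι) (A : ι → Matrix l m α)
    (B : Matrix n p α) : (∑ i ∈ s, A i) ⊗ₖ B = ∑ i ∈ s, A i ⊗ₖ B := by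
  ext
  simp [Matrix.sum_apply, Finset.sum_mul]

theorem kronecker_sum [NonUnitalNonAssocSemiring α] (s : Finset ι) (A : Matrix l m α)
    (B : ι → Matrix n p α) : A ⊗ₖ (∑ i ∈ s, B i) = ∑ i ∈ s, A ⊗ₖ B i := by
  ext
  simp [Matrix.sum_apply, Finset.mul_sum]

theorem isStarProjection_single_same [Fintype m] [DecidableEq m] [Semiring α] [StarRing α]
    (i : m) : IsStarProjection (single i i (1 : α)) where
  isIdempotentElem := by rw [IsIdempotentElem, single_mul_single_same, one_mul]
  isSelfAdjoint := by rw [IsSelfAdjoint, star_eq_conjTranspose, conjTranspose_single, star_one]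

theorem _root_.IsStarProjection.kronecker [Fintype m] [DecidableEq m] [Fintype n] [DecidableEq n]
    [CommSemiring α] [StarRing α] {P : Matrix m m α} {Q : Matrix n n α}
    (hP : IsStarProjection P) (hQ : IsStarProjection Q) : IsStarProjection (P ⊗ₖ Q) where
  isIdempotentElem := by
    rw [IsIdempotentElem, ← mul_kronecker_mul, hP.isIdempotentElem.eq, hQ.isIdempotentElem.eq]
  isSelfAdjoint := by
    rw [IsSelfAdjoint, star_eq_conjTranspose, conjTranspose_kronecker, ← star_eq_conjTranspose,
      ← star_eq_conjTranspose, hP.isSelfAdjoint.star_eq, hQ.isSelfAdjoint.star_eq]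

section SumSingleKroneckerSingle

variable [Fintype m] [DecidableEq m] [Fintype κ] [DecidableEq κ] [CommSemiring α] [StarRing α]

theorem star_sum_single_kronecker_single_mul_self (a : m) {f : m → κ} (hf : f.Injective) (b : κ) :
    star (∑ i, single a i (1 : α) ⊗ₖ single (f i) b 1) * ∑ i, single a i 1 ⊗ₖ single (f i) b 1 =
      1 ⊗ₖ single b b 1 := by
  simp only [star_sum, star_eq_conjTranspose, conjTranspose_kronecker, conjTranspose_single,
    star_one, Finset.sum_mul_sum, ← mul_kronecker_mul]
  rw [← sum_single_one, sum_kronecker]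
  refine Finset.sum_congr rfl fun i _ => ?_
  rw [Finset.sum_eq_single i]
  · rw [single_mul_single_same, single_mul_single_same, one_mul]
  · intro j _ hji
    rw [single_mul_single_of_ne _ _ _ _ (hf.ne hji).symm, kronecker_zero]
  · simp

theorem sum_single_kronecker_single_mul_star_self (a : m) (f : m → κ) (b : κ) :
    (∑ i, single a i (1 : α) ⊗ₖ single (f i) b 1) * star (∑ i, single a i 1 ⊗ₖ single (f i) b 1) =
      single a a 1 ⊗ₖ ∑ i, single (f i) (f i) 1 := by
  simp only [star_sum, star_eq_conjTranspose, conjTranspose_kronecker, conjTranspose_single,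
    star_one, Finset.sum_mul_sum, ← mul_kronecker_mul]
  rw [kronecker_sum]
  refine Finset.sum_congr rfl fun i _ => ?_
  rw [Finset.sum_eq_single i]
  · rw [single_mul_single_same, single_mul_single_same, one_mul]
  · intro j _ hji
    rw [single_mul_single_of_ne _ _ _ _ (Ne.symm hji), zero_kronecker]
  · simp

end SumSingleKroneckerSingle

theorem norm_single_kronecker_le_one {𝕜 m n : Type*} [RCLike 𝕜] [Fintype m] [DecidableEq m]
    [Fintype n] [DecidableEq n] (j k : m) {Q : Matrix n n 𝕜} (hQ : IsStarProjection Q) :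
    ‖single j k (1 : 𝕜) ⊗ₖ Q‖ ≤ 1 := by
  apply norm_le_one_of_isStarProjection_star_mul_self
  rw [star_eq_conjTranspose, conjTranspose_kronecker, conjTranspose_single, star_one,
    ← star_eq_conjTranspose, hQ.isSelfAdjoint.star_eq, ← mul_kronecker_mul,
    single_mul_single_same, one_mul, hQ.isIdempotentElem.eq]
  exact (isStarProjection_single_same k).kronecker hQ

theorem sum_single_castSucc_castSucc_one {α : Type*} [Ring α] (n : ℕ) :
    ∑ i : Fin n, single i.castSucc i.castSucc (1 : α) = 1 - single (Fin.last n) (Fin.last n) 1 := by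
  rw [eq_sub_iff_add_eq, ← Fin.sum_univ_castSucc (f := fun i => single i i (1 : α)),
    sum_single_one]

end Matrix

section DimensionDrop

variable {n : ℕ}

theorem star_vfMat (j k : Fin n) (t : ℝ) : star (vfMat n j k t) = vfMat n k j t := by
  simp [vfMat, star_eq_conjTranspose, conjTranspose_kronecker]

theorem vfMat_mul_vfMat (j k l m : Fin n) (t : ℝ) :
    vfMat n j k t * vfMat n l m t =
      if k = l then
        single j m 1 ⊗ₖ ((1 - (t : ℂ) • single (Fin.last n) (Fin.last n) 1) *
          (1 - (t : ℂ) • single (Fin.last n) (Fin.last n) 1))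
      else 0 := by
  rw [vfMat, vfMat, ← mul_kronecker_mul]
  split_ifs with h
  · rw [h, single_mul_single_same, one_mul]
  · rw [single_mul_single_of_ne _ _ _ _ h, zero_kronecker]

theorem norm_vfMat_le_one (j k : Fin n) {t : ℝ} (ht : t ∈ Set.Icc (0 : ℝ) 1) :
    ‖vfMat n j k t‖ ≤ 1 := by
  have hsplit : vfMat n j k t = ((1 - t : ℝ) : ℂ) • (single j k 1 ⊗ₖ 1) +
      (t : ℂ) • (single j k 1 ⊗ₖ (1 - single (Fin.last n) (Fin.last n) 1)) := by
    rw [← kronecker_smul, ← kronecker_smul, ← kronecker_add, vfMat]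
    congr 1
    push_cast
    module
  have hE := isStarProjection_single_same (Fin.last n) (α := ℂ)
  calc ‖vfMat n j k t‖
      ≤ ‖((1 - t : ℝ) : ℂ)‖ * ‖single j k (1 : ℂ) ⊗ₖ (1 : Matrix (Fin (n + 1)) _ ℂ)‖ +
        ‖(t : ℂ)‖ * ‖single j k (1 : ℂ) ⊗ₖ (1 - single (Fin.last n) (Fin.last n) 1)‖ :=
        hsplit ▸ norm_add_le_of_le (norm_smul_le _ _) (norm_smul_le _ _)
    _ ≤ (1 - t) * 1 + t * 1 := by
        rw [Complex.norm_of_nonneg (sub_nonneg.2 ht.2), Complex.norm_of_nonneg ht.1]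
        gcongr
        · linarith [ht.2]
        · exact norm_single_kronecker_le_one j k (IsStarProjection.one _)
        · exact ht.1
        · exact norm_single_kronecker_le_one j k hE.one_sub
    _ = 1 := by ring

variable [NeZero n]

theorem star_vsMat_mul_vsMat {t : ℝ} (ht : 0 ≤ t) :
    star (vsMat n t) * vsMat n t = (t : ℂ) • (1 ⊗ₖ single (Fin.last n) (Fin.last n) 1) := by
  rw [vsMat, star_smul, smul_mul_smul_comm,
    star_sum_single_kronecker_single_mul_self _ (Fin.castSucc_injective n), Complex.star_def,
    Complex.conj_ofReal, ← Complex.ofReal_mul, Real.mul_self_sqrt ht]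

theorem vsMat_mul_star_vsMat {t : ℝ} (ht : 0 ≤ t) :
    vsMat n t * star (vsMat n t) =
      (t : ℂ) • (single 0 0 1 ⊗ₖ (1 - single (Fin.last n) (Fin.last n) 1)) := by
  rw [vsMat, star_smul, smul_mul_smul_comm, sum_single_kronecker_single_mul_star_self,
    sum_single_castSucc_castSucc_one, Complex.star_def, Complex.conj_ofReal, ← Complex.ofReal_mul,
    Real.mul_self_sqrt ht]

theorem norm_vsMat_le_one {t : ℝ} (ht : t ∈ Set.Icc (0 : ℝ) 1) : ‖vsMat n t‖ ≤ 1 := by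
  have hS : IsStarProjection (star (∑ i : Fin n, single (0 : Fin n) i (1 : ℂ) ⊗ₖ
      single i.castSucc (Fin.last n) 1) * ∑ i : Fin n, single (0 : Fin n) i 1 ⊗ₖ
      single i.castSucc (Fin.last n) 1) := by
    rw [star_sum_single_kronecker_single_mul_self _ (Fin.castSucc_injective n)]
    exact (IsStarProjection.one _).kronecker (isStarProjection_single_same _)
  calc ‖vsMat n t‖ ≤ ‖((√t : ℝ) : ℂ)‖ * 1 :=
        (norm_smul_le _ _).trans <| by
          gcongr
          exact norm_le_one_of_isStarProjection_star_mul_self hS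
    _ ≤ 1 := by
        rw [mul_one, Complex.norm_real, Real.norm_of_nonneg (Real.sqrt_nonneg t)]
        exact Real.sqrt_le_one.2 ht.2

theorem vfMat_zero_zero_mul_vsMat (t : ℝ) : vfMat n 0 0 t * vsMat n t = vsMat n t := by
  rw [vsMat, mul_smul_comm, Finset.mul_sum]
  congr 1
  refine Finset.sum_congr rfl fun i _ => ?_
  rw [vfMat, ← mul_kronecker_mul, single_mul_single_same, one_mul, sub_mul, one_mul,
    smul_mul_assoc, single_mul_single_of_ne _ _ _ _ (Fin.castSucc_lt_last i).ne', smul_zero,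
    sub_zero]

theorem sum_vfMat_add_star_vsMat_mul_vsMat {t : ℝ} (ht : 0 ≤ t) :
    ∑ j, vfMat n j j t + star (vsMat n t) * vsMat n t = 1 := by
  simp only [vfMat]
  rw [star_vsMat_mul_vsMat ht, ← sum_kronecker, sum_single_one, ← kronecker_smul,
    ← kronecker_add, sub_add_cancel, one_kronecker_one]

theorem star_vsMat_mul_vsMat_add_sum_vfMat_mul_mul_vfMat {t : ℝ} (ht : 0 ≤ t) :
    star (vsMat n t) * vsMat n t +
        ∑ j, vfMat n j 0 t * (vsMat n t * star (vsMat n t)) * vfMat n 0 j t =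
      (t : ℂ) • 1 := by
  have hE := isStarProjection_single_same (Fin.last n) (α := ℂ)
  have hterm (j : Fin n) : vfMat n j 0 t * (vsMat n t * star (vsMat n t)) * vfMat n 0 j t =
      (t : ℂ) • (single j j 1 ⊗ₖ (1 - single (Fin.last n) (Fin.last n) 1)) := by
    rw [vsMat_mul_star_vsMat ht, mul_smul_comm, smul_mul_assoc, vfMat, vfMat,
      ← mul_kronecker_mul, ← mul_kronecker_mul, single_mul_single_same,
      single_mul_single_same, one_mul, one_mul, hE.one_sub_smul_mul_one_sub,
      hE.one_sub_mul_one_sub_smul]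
  rw [star_vsMat_mul_vsMat ht, Finset.sum_congr rfl fun j _ => hterm j, ← Finset.smul_sum,
    ← sum_kronecker, sum_single_one, ← smul_add, ← kronecker_add, add_sub_cancel,
    one_kronecker_one]

end DimensionDrop

/-- in `C([0,1], Mₙ(ℂ) ⊗ M_{n+1}(ℂ))`, the elements `ṽf j k` and `ṽs` form a
dimension-drop system of size `n` (stated pointwise on `[0,1]`; the norm is the L²-operator
norm on matrices, so the sup-norm conditions are exactly the pointwise conditions below);
moreover `ṽs* ṽs + ∑ j, ṽf j 0 * ṽs ṽs* * ṽf 0 j` is the function `t ↦ t • 1`. -/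
theorem vfMat_vsMat_isDimDropSystem (n : ℕ) [NeZero n] :
    (∀ t ∈ Set.Icc (0 : ℝ) 1, ‖vsMat n t‖ ≤ 1) ∧
      (∀ j k : Fin n, ∀ t ∈ Set.Icc (0 : ℝ) 1, ‖vfMat n j k t‖ ≤ 1) ∧
      (∀ j k : Fin n, ∀ t ∈ Set.Icc (0 : ℝ) 1, star (vfMat n j k t) = vfMat n k j t) ∧
      (∀ j k l m : Fin n, ∀ t ∈ Set.Icc (0 : ℝ) 1,
        vfMat n j k t * vfMat n l m t =
          if k = l then vfMat n j j t * vfMat n j m t else 0) ∧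
      (∀ t ∈ Set.Icc (0 : ℝ) 1, vfMat n 0 0 t * vsMat n t = vsMat n t) ∧
      (∀ t ∈ Set.Icc (0 : ℝ) 1,
        (∑ j, vfMat n j j t) + star (vsMat n t) * vsMat n t = 1) ∧
      (∀ t ∈ Set.Icc (0 : ℝ) 1,
        star (vsMat n t) * vsMat n t +
            ∑ j, vfMat n j 0 t * (vsMat n t * star (vsMat n t)) * vfMat n 0 j t =
          (t : ℂ) • (1 : Matrix (Fin n × Fin (n + 1)) (Fin n × Fin (n + 1)) ℂ)) :=
  ⟨fun _ ht => norm_vsMat_le_one ht,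
    fun j k _ ht => norm_vfMat_le_one j k ht,
    fun j k t _ => star_vfMat j k t,
    fun j k l m t _ => by rw [vfMat_mul_vfMat, vfMat_mul_vfMat, if_pos rfl],
    fun t _ => vfMat_zero_zero_mul_vsMat t,
    fun _ ht => sum_vfMat_add_star_vsMat_mul_vsMat ht.1,
    fun _ ht => star_vsMat_mul_vsMat_add_sum_vfMat_mul_mul_vfMat ht.1⟩
end

section
/- Let G be a group, let m, k ≥ 1, and let u : G → U(M_m(ℂ)) and w : G → U(M_k(ℂ)) be group homomorphisms into the respective unitary groups. Then there exists a unital ⋆-homomorphism ι : M_m(ℂ) → C([0,1], M_m(ℂ) ⊗ M_m(ℂ) ⊗ M_k(ℂ)) such that for all a ∈ M_m(ℂ): (i) ι(a)(0) = a ⊗ 1_m ⊗ 1_k; (ii) ι(a)(1) = 1_m ⊗ a ⊗ 1_k; and (iii) for every g ∈ G and t ∈ [0,1], ι(u_g a u_g*)(t) = (u_g ⊗ u_g ⊗ w_g) · ι(a)(t) · (u_g ⊗ u_g ⊗ w_g)*. -/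
open Matrix
open scoped Kronecker

namespace FlipPathAux

variable {m : ℕ}

/-- The swap (flip) matrix on `ℂ^m ⊗ ℂ^m`. -/
def S (m : ℕ) : Matrix (Fin m × Fin m) (Fin m × Fin m) ℂ :=
  fun p q => if p.1 = q.2 ∧ p.2 = q.1 then 1 else 0

lemma S_mul_kron (a b : Matrix (Fin m) (Fin m) ℂ) :
    S m * (a ⊗ₖ b) = (b ⊗ₖ a) * S m := by
  ext ⟨i, j⟩ ⟨p, q⟩
  simp [S, Matrix.mul_apply, Matrix.kroneckerMap_apply, Fintype.sum_prod_type, ite_and,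
    mul_comm]

lemma S_mul_S : S m * S m = 1 := by
  ext ⟨i, j⟩ ⟨p, q⟩
  simp [S, Matrix.mul_apply, Matrix.one_apply, Fintype.sum_prod_type, ite_and, Prod.ext_iff,
    eq_comm, and_comm]

lemma S_star : star (S m) = S m := by
  ext ⟨i, j⟩ ⟨p, q⟩
  simp [S, Matrix.conjTranspose_apply, apply_ite, and_comm]
  aesop

lemma kron_star {α β : Type*} [Fintype α] [Fintype β]
    (A : Matrix α α ℂ) (B : Matrix β β ℂ) :
    star (A ⊗ₖ B) = star A ⊗ₖ star B := by
  ext ⟨i, j⟩ ⟨p, q⟩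
  simp [Matrix.conjTranspose_apply, Matrix.kroneckerMap_apply]

noncomputable def cc (t : ℝ) : ℂ := (Real.cos (Real.pi * t / 2) : ℝ)
noncomputable def sn (t : ℝ) : ℂ := (Real.sin (Real.pi * t / 2) : ℝ)

lemma sq_add (t : ℝ) : cc t * cc t + sn t * sn t = 1 := by
  unfold cc sn
  norm_cast
  rw [← pow_two, ← pow_two]
  exact Real.cos_sq_add_sin_sq _

/-- The rotation unitary path. -/
noncomputable def V (m : ℕ) (t : ℝ) :
    Matrix (Fin m × Fin m) (Fin m × Fin m) ℂ :=
  cc t • 1 + (Complex.I * sn t) • S m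

lemma V_star (t : ℝ) : star (V m t) = cc t • 1 - (Complex.I * sn t) • S m := by
  have hc : star (cc t) = cc t := Complex.conj_ofReal _
  have hs : star (Complex.I * sn t) = -(Complex.I * sn t) := by
    rw [star_mul']
    rw [show star (sn t) = sn t from Complex.conj_ofReal _]
    simp [mul_comm]
  simp [V, star_add, star_smul, hc, hs, S_star, neg_smul]
  rfl

lemma V_mul_Vstar (t : ℝ) : V m t * star (V m t) = 1 := by
  rw [V_star]
  have key : cc t * cc t - Complex.I * sn t * (Complex.I * sn t) = 1 := by
    rw [← sq_add t]; ring_nf; simp [Complex.I_sq]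
  calc V m t * (cc t • 1 - (Complex.I * sn t) • S m)
      = (cc t * cc t - Complex.I * sn t * (Complex.I * sn t)) • 1 := by
        simp only [V, add_mul, mul_sub, smul_mul_assoc, Matrix.mul_smul, smul_smul,
          Matrix.one_mul, Matrix.mul_one, S_mul_S, sub_smul, mul_comm]
        abel
    _ = 1 := by rw [key, one_smul]

lemma Vstar_mul_V (t : ℝ) : star (V m t) * V m t = 1 := by
  rw [V_star]
  have key : cc t * cc t - Complex.I * sn t * (Complex.I * sn t) = 1 := by
    rw [← sq_add t]; ring_nf; simp [Complex.I_sq]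
  calc (cc t • 1 - (Complex.I * sn t) • S m) * V m t
      = (cc t * cc t - Complex.I * sn t * (Complex.I * sn t)) • 1 := by
        simp only [V, mul_add, sub_mul, smul_mul_assoc, Matrix.mul_smul, smul_smul,
          Matrix.one_mul, Matrix.mul_one, S_mul_S, sub_smul, mul_comm]
        abel
    _ = 1 := by rw [key, one_smul]

lemma V_continuous (m : ℕ) : Continuous (V m) := by
  unfold V cc sn
  apply Continuous.add
  · exact ((Complex.continuous_ofReal.comp
      (Real.continuous_cos.comp (by continuity))).smul continuous_const)
  · exact ((continuous_const.mul (Complex.continuous_ofReal.comp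
      (Real.continuous_sin.comp (by continuity)))).smul continuous_const)

lemma V_comm {t : ℝ} {X : Matrix (Fin m × Fin m) (Fin m × Fin m) ℂ}
    (h : S m * X = X * S m) : V m t * X = X * V m t := by
  simp [V, add_mul, mul_add, smul_mul_assoc, Matrix.mul_smul, h]

lemma Vstar_comm {t : ℝ} {X : Matrix (Fin m × Fin m) (Fin m × Fin m) ℂ}
    (h : S m * X = X * S m) : star (V m t) * X = X * star (V m t) := by
  rw [V_star]
  simp [sub_mul, mul_sub, smul_mul_assoc, Matrix.mul_smul, h]

lemma conj_comm {n : Type*} [Fintype n] (Vt X Uu : Matrix n n ℂ)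
    (hU : Vt * Uu = Uu * Vt) (hU' : star Vt * Uu = Uu * star Vt) :
    Vt * (Uu * X * star Uu) * star Vt = Uu * (Vt * X * star Vt) * star Uu := by
  have h4 : star Uu * star Vt = star Vt * star Uu := by
    have h5 := congrArg star hU
    rw [Matrix.star_mul, Matrix.star_mul] at h5
    exact h5
  calc Vt * (Uu * X * star Uu) * star Vt
      = Vt * Uu * X * (star Uu * star Vt) := by simp only [Matrix.mul_assoc]
    _ = (Uu * Vt) * X * (star Vt * star Uu) := by rw [hU, h4]
    _ = Uu * (Vt * X * star Vt) * star Uu := by simp only [Matrix.mul_assoc]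

lemma V_conj_mul (t : ℝ) (a b : Matrix (Fin m × Fin m) (Fin m × Fin m) ℂ) :
    V m t * (a * b) * star (V m t) =
      (V m t * a * star (V m t)) * (V m t * b * star (V m t)) := by
  have h : star (V m t) * (V m t * (b * star (V m t))) = b * star (V m t) := by
    rw [← Matrix.mul_assoc, Vstar_mul_V, Matrix.one_mul]
  simp only [Matrix.mul_assoc, h]

end FlipPathAux

open FlipPathAux in
/-- The path homomorphism. -/
noncomputable def flipPathHom (m k : ℕ) :
    Matrix (Fin m) (Fin m) ℂ →⋆ₐ[ℂ]
      C(Set.Icc (0 : ℝ) 1, Matrix ((Fin m × Fin m) × Fin k) ((Fin m × Fin m) × Fin k) ℂ) where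
  toFun a :=
    ⟨fun t => (V m ↑t * ((a ⊗ₖ (1 : Matrix (Fin m) (Fin m) ℂ))) * star (V m ↑t)) ⊗ₖ
        (1 : Matrix (Fin k) (Fin k) ℂ), by
      apply continuous_matrix
      rintro ⟨p, i⟩ ⟨q, j⟩
      simp only [Matrix.kroneckerMap_apply]
      have hV : Continuous fun t : Set.Icc (0:ℝ) 1 => V m ↑t :=
        (V_continuous m).comp continuous_subtype_val
      exact (((hV.matrix_mul continuous_const).matrix_mul
        hV.matrix_conjTranspose).matrix_elem p q).mul continuous_const⟩
  map_one' := by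
    ext t
    simp [Matrix.one_kronecker_one, V_mul_Vstar]
  map_mul' a b := by
    ext t
    simp only [ContinuousMap.coe_mk, ContinuousMap.mul_apply]
    rw [← Matrix.mul_kronecker_mul, Matrix.mul_one]
    rw [show (a * b) ⊗ₖ (1 : Matrix (Fin m) (Fin m) ℂ) =
      (a ⊗ₖ (1 : Matrix (Fin m) (Fin m) ℂ)) * (b ⊗ₖ (1 : Matrix (Fin m) (Fin m) ℂ)) from by
        rw [← Matrix.mul_kronecker_mul, Matrix.mul_one]]
    rw [V_conj_mul]
  map_zero' := by
    ext t
    simp [Matrix.zero_kronecker, Matrix.mul_zero, Matrix.zero_mul]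
  map_add' a b := by
    ext t
    simp [Matrix.add_kronecker, Matrix.mul_add, Matrix.add_mul]
  commutes' r := by
    refine ContinuousMap.ext fun t => ?_
    simp only [Algebra.algebraMap_eq_smul_one, ContinuousMap.coe_mk, ContinuousMap.smul_apply,
      ContinuousMap.one_apply, Matrix.smul_kronecker, Matrix.smul_mul, Matrix.mul_smul]
    rw [Matrix.one_kronecker_one, Matrix.mul_one, V_mul_Vstar, Matrix.one_kronecker_one]
  map_star' a := by
    refine ContinuousMap.ext fun t => ?_
    simp only [ContinuousMap.coe_mk, ContinuousMap.star_apply]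
    rw [kron_star, Matrix.star_mul, Matrix.star_mul, star_star, kron_star, star_one, star_one,
      Matrix.mul_assoc]

open FlipPathAux in
/-- for unitary representations `u : G → U(Mₘ(ℂ))` and `w : G → U(M_k(ℂ))`, there
is a unital ⋆-homomorphism `ι : Mₘ(ℂ) → C([0,1], Mₘ(ℂ) ⊗ Mₘ(ℂ) ⊗ M_k(ℂ))` with
`ι(a)(0) = a ⊗ 1 ⊗ 1`, `ι(a)(1) = 1 ⊗ a ⊗ 1`, and which is equivariant for conjugation by
`u_g` on `Mₘ(ℂ)` and pointwise conjugation by `u_g ⊗ u_g ⊗ w_g` on the target. -/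
theorem exists_equivariant_flip_path {G : Type*} [Group G] (m k : ℕ)
    (hm : 1 ≤ m) (hk : 1 ≤ k)
    (u : G →* Matrix.unitaryGroup (Fin m) ℂ) (w : G →* Matrix.unitaryGroup (Fin k) ℂ) :
    ∃ ι : Matrix (Fin m) (Fin m) ℂ →⋆ₐ[ℂ]
        C(Set.Icc (0 : ℝ) 1, Matrix ((Fin m × Fin m) × Fin k) ((Fin m × Fin m) × Fin k) ℂ),
      (∀ a : Matrix (Fin m) (Fin m) ℂ,
          ι a ⟨0, Set.left_mem_Icc.mpr zero_le_one⟩ =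
            (a ⊗ₖ (1 : Matrix (Fin m) (Fin m) ℂ)) ⊗ₖ (1 : Matrix (Fin k) (Fin k) ℂ)) ∧
        (∀ a : Matrix (Fin m) (Fin m) ℂ,
          ι a ⟨1, Set.right_mem_Icc.mpr zero_le_one⟩ =
            ((1 : Matrix (Fin m) (Fin m) ℂ) ⊗ₖ a) ⊗ₖ (1 : Matrix (Fin k) (Fin k) ℂ)) ∧
        ∀ (g : G) (a : Matrix (Fin m) (Fin m) ℂ) (t : Set.Icc (0 : ℝ) 1),
          ι ((u g : Matrix (Fin m) (Fin m) ℂ) * a * star (u g : Matrix (Fin m) (Fin m) ℂ)) t =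
            (((u g : Matrix (Fin m) (Fin m) ℂ) ⊗ₖ (u g : Matrix (Fin m) (Fin m) ℂ)) ⊗ₖ
                (w g : Matrix (Fin k) (Fin k) ℂ)) * ι a t *
              star (((u g : Matrix (Fin m) (Fin m) ℂ) ⊗ₖ (u g : Matrix (Fin m) (Fin m) ℂ)) ⊗ₖ
                (w g : Matrix (Fin k) (Fin k) ℂ)) := by
  refine ⟨flipPathHom m k, ?_, ?_, ?_⟩
  · intro a
    have hV0 : V m (0 : ℝ) = 1 := by
      simp [V, cc, sn]
    show (V m _ * _ * star (V m _)) ⊗ₖ _ = _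
    rw [hV0]
    simp
  · intro a
    have hV1 : V m (1 : ℝ) = Complex.I • S m := by
      simp [V, cc, sn, Real.cos_pi_div_two, Real.sin_pi_div_two]
    show (V m _ * _ * star (V m _)) ⊗ₖ _ = _
    rw [hV1]
    have hstar : star (Complex.I • S m) = (-Complex.I) • S m := by
      rw [star_smul, S_star, Complex.star_def, Complex.conj_I]
    rw [hstar]
    simp only [smul_mul_assoc, Matrix.mul_smul, smul_smul, Matrix.smul_kronecker]
    rw [S_mul_kron, Matrix.mul_assoc, S_mul_S, Matrix.mul_one]
    norm_num [Complex.I_mul_I]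
  · intro g a t
    set U := ((u g : Matrix (Fin m) (Fin m) ℂ) ⊗ₖ (u g : Matrix (Fin m) (Fin m) ℂ)) with hUdef
    have hSU : S m * U = U * S m := S_mul_kron _ _
    have huu : (u g : Matrix (Fin m) (Fin m) ℂ) * star (u g : Matrix (Fin m) (Fin m) ℂ) = 1 :=
      Unitary.mul_star_self_of_mem (u g).2
    have hww : (w g : Matrix (Fin k) (Fin k) ℂ) * star (w g : Matrix (Fin k) (Fin k) ℂ) = 1 :=
      Unitary.mul_star_self_of_mem (w g).2
    have hkey : ((u g : Matrix (Fin m) (Fin m) ℂ) * a * star (u g : Matrix (Fin m) (Fin m) ℂ))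
        ⊗ₖ (1 : Matrix (Fin m) (Fin m) ℂ) = U * (a ⊗ₖ 1) * star U := by
      rw [hUdef, kron_star, ← Matrix.mul_kronecker_mul, ← Matrix.mul_kronecker_mul,
        Matrix.mul_one, huu]
    show (V m _ * _ * star (V m _)) ⊗ₖ _ = _ * ((V m _ * _ * star (V m _)) ⊗ₖ _) * _
    rw [hkey, conj_comm _ _ _ (V_comm hSU) (Vstar_comm hSU)]
    conv_rhs => rw [kron_star, ← Matrix.mul_kronecker_mul, ← Matrix.mul_kronecker_mul,
      Matrix.mul_one, hww]
end

section
/- Let G be a group acting on a complex normed vector space A by linear isometries g ↦ α_g. Let x ∈ A, let F be a nonempty finite subset of G, let k ∈ G, and set y = |F|^{-1} ∑_{g ∈ F} α_g(x). Then ‖α_k(y) − y‖ ≤ (|kF △ F| / |F|) · ‖x‖, where kF = { k·g : g ∈ F } and △ denotes symmetric difference. In particular, if ‖x‖ ≤ 1 and |kF △ F| ≤ ε·|F|, then ‖α_k(y) − y‖ ≤ ε. -/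
/-- if a group `G` acts on a complex normed vector space `A` by linear isometries
and `y = |F|⁻¹ ∑_{g ∈ F} α_g x` for a nonempty finite `F ⊆ G`, then
`‖α_k y - y‖ ≤ (|kF △ F| / |F|) ‖x‖`; in particular if `‖x‖ ≤ 1` and `|kF △ F| ≤ ε |F|`
then `‖α_k y - y‖ ≤ ε`. -/
theorem folner_average_almost_invariant {G : Type*} [Group G] [DecidableEq G]
    {A : Type*} [NormedAddCommGroup A] [NormedSpace ℂ A]
    (α : G →* (A ≃ₗᵢ[ℂ] A)) (x : A) (F : Finset G) (hF : F.Nonempty) (k : G)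
    (y : A) (hy : y = ((F.card : ℂ))⁻¹ • ∑ g ∈ F, α g x) :
    ‖α k y - y‖ ≤ (((symmDiff (F.image fun g => k * g) F).card : ℝ) / (F.card : ℝ)) * ‖x‖ ∧
      ∀ ε : ℝ, ‖x‖ ≤ 1 →
        ((symmDiff (F.image fun g => k * g) F).card : ℝ) ≤ ε * (F.card : ℝ) →
        ‖α k y - y‖ ≤ ε := by
  set S := F.image fun g => k * g with hS
  have hcardpos : (0 : ℝ) < F.card := by exact_mod_cast hF.card_pos
  have hsum : ∀ T : Finset G, ‖∑ g ∈ T, α g x‖ ≤ T.card * ‖x‖ := by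
    intro T
    calc ‖∑ g ∈ T, α g x‖ ≤ ∑ g ∈ T, ‖α g x‖ := norm_sum_le _ _
    _ = ∑ g ∈ T, ‖x‖ := by simp [LinearIsometryEquiv.norm_map]
    _ = T.card * ‖x‖ := by simp
  have key : ‖α k y - y‖ ≤ (((symmDiff S F).card : ℝ) / (F.card : ℝ)) * ‖x‖ := by
    have hky : α k y = ((F.card : ℂ))⁻¹ • ∑ g ∈ S, α g x := by
      rw [hy, map_smul]
      congr 1
      rw [hS, Finset.sum_image (by intro a _ b _ h; exact mul_left_cancel h)]
      rw [map_sum]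
      exact Finset.sum_congr rfl fun g _ => by rw [map_mul]; rfl
    have hdiff : α k y - y =
        ((F.card : ℂ))⁻¹ • ((∑ g ∈ S \ F, α g x) - ∑ g ∈ F \ S, α g x) := by
      rw [hky, hy, ← smul_sub]
      congr 1
      rw [Finset.sum_sdiff_sub_sum_sdiff]
    rw [hdiff, norm_smul]
    have h1 : ‖((F.card : ℂ))⁻¹‖ = (F.card : ℝ)⁻¹ := by
      simp [norm_inv]
    rw [h1]
    have h2 : ‖(∑ g ∈ S \ F, α g x) - ∑ g ∈ F \ S, α g x‖ ≤
        ((symmDiff S F).card : ℝ) * ‖x‖ := by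
      calc ‖(∑ g ∈ S \ F, α g x) - ∑ g ∈ F \ S, α g x‖
          ≤ ‖∑ g ∈ S \ F, α g x‖ + ‖∑ g ∈ F \ S, α g x‖ := norm_sub_le _ _
        _ ≤ (S \ F).card * ‖x‖ + (F \ S).card * ‖x‖ := add_le_add (hsum _) (hsum _)
        _ = ((symmDiff S F).card : ℝ) * ‖x‖ := by
            have : (symmDiff S F).card = (S \ F).card + (F \ S).card := by
              rw [symmDiff_def, Finset.sup_eq_union,
                Finset.card_union_of_disjoint disjoint_sdiff_sdiff]
            rw [this]; push_cast; ring
    calc (F.card : ℝ)⁻¹ * ‖(∑ g ∈ S \ F, α g x) - ∑ g ∈ F \ S, α g x‖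
        ≤ (F.card : ℝ)⁻¹ * (((symmDiff S F).card : ℝ) * ‖x‖) := by
          exact mul_le_mul_of_nonneg_left h2 (by positivity)
      _ = ((symmDiff S F).card : ℝ) / (F.card : ℝ) * ‖x‖ := by ring
  refine ⟨key, fun ε hx hε => ?_⟩
  calc ‖α k y - y‖ ≤ ((symmDiff S F).card : ℝ) / (F.card : ℝ) * ‖x‖ := key
    _ ≤ ((symmDiff S F).card : ℝ) / (F.card : ℝ) * 1 := by
        exact mul_le_mul_of_nonneg_left hx (by positivity)
    _ = ((symmDiff S F).card : ℝ) / (F.card : ℝ) := mul_one _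
    _ ≤ ε := by rw [div_le_iff₀ hcardpos]; exact hε
end

section
/- Let G be a group, H a subgroup of G of finite index, A a unital complex C*-algebra, and α, β : H → Aut(A) actions of H on A by ⋆-automorphisms. Suppose there are unitaries u_h ∈ A (h ∈ H) with u_{h₁h₂} = u_{h₁} · α_{h₁}(u_{h₂}) and β_h(a) = u_h α_h(a) u_h* for all h, h₁, h₂ ∈ H and a ∈ A. Then the induced G-actions Ind α on Ind_H^G(A,α) and Ind β on Ind_H^G(A,β) are cocycle conjugate: there exist a unital ⋆-algebra isomorphism φ : Ind_H^G(A,α) → Ind_H^G(A,β) and unitary elements v_g ∈ Ind_H^G(A,α) (g ∈ G) such that v_{g₁g₂} = v_{g₁} · (Ind α)_{g₁}(v_{g₂}) for all g₁, g₂ ∈ G, and φ(v_g · (Ind α)_g(f) · v_g*) = (Ind β)_g(φ(f)) for all g ∈ G and f ∈ Ind_H^G(A,α). -/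
def indAlg {G : Type*} [Group G] (H : Subgroup G) {A : Type*} [CStarAlgebra A]
    (α : H →* (A ≃ₐ[ℂ] A)) (hstar : ∀ (h : H) (a : A), α h (star a) = star (α h a)) :
    StarSubalgebra ℂ (G → A) where
  carrier := {f | ∀ (g : G) (h : H), f (g * h) = α h⁻¹ (f g)}
  mul_mem' := by
    intro f₁ f₂ h₁ h₂ g h
    simp only [Pi.mul_apply, h₁ g h, h₂ g h, map_mul]
  one_mem' := by
    intro g h
    simp only [Pi.one_apply, map_one]
  add_mem' := by
    intro f₁ f₂ h₁ h₂ g h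
    simp only [Pi.add_apply, h₁ g h, h₂ g h, map_add]
  zero_mem' := by
    intro g h
    simp only [Pi.zero_apply, map_zero]
  algebraMap_mem' := by
    intro c g h
    simp only [Pi.algebraMap_apply]
    exact ((α (h : H)⁻¹).commutes c).symm
  star_mem' := by
    intro f hf g h
    simp only [Pi.star_apply, hf g h, hstar]

def indAct {G : Type*} [Group G] (H : Subgroup G) {A : Type*} [CStarAlgebra A]
    (α : H →* (A ≃ₐ[ℂ] A)) (hstar : ∀ (h : H) (a : A), α h (star a) = star (α h a))
    (g : G) (x : indAlg H α hstar) : indAlg H α hstar :=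
  ⟨fun k => (x : G → A) (g⁻¹ * k), by
    intro k h
    show (x : G → A) (g⁻¹ * (k * h)) = α h⁻¹ ((x : G → A) (g⁻¹ * k))
    rw [← mul_assoc]
    exact x.2 (g⁻¹ * k) h⟩

section Aux

variable {G : Type*} [Group G] (H : Subgroup G) {A : Type*} [CStarAlgebra A]

noncomputable def secG (g : G) : G := (QuotientGroup.mk g : G ⧸ H).out

lemma secG_mem (g : G) : g⁻¹ * secG H g ∈ H :=
  QuotientGroup.eq.mp ((Quotient.out_eq (QuotientGroup.mk g : G ⧸ H)).symm)

lemma secG_mul (g : G) (h : H) : secG H (g * (h : G)) = secG H g := by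
  unfold secG
  congr 1
  exact QuotientGroup.mk_mul_of_mem g h.2

variable (α : H →* (A ≃ₐ[ℂ] A)) (u : H → A)

noncomputable def ccF (g : G) : A := u ⟨g⁻¹ * secG H g, secG_mem H g⟩

lemma ccF_mul (hu_cocycle : ∀ h₁ h₂ : H, u (h₁ * h₂) = u h₁ * α h₁ (u h₂))
    (g : G) (h : H) :
    ccF H u (g * (h : G)) = u h⁻¹ * α h⁻¹ (ccF H u g) := by
  have key : (⟨(g * (h : G))⁻¹ * secG H (g * (h : G)), secG_mem H _⟩ : H)
      = h⁻¹ * ⟨g⁻¹ * secG H g, secG_mem H g⟩ := by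
    apply Subtype.ext
    simp [secG_mul H g h, mul_inv_rev, mul_assoc]
  unfold ccF
  rw [key, hu_cocycle]

end Aux

/-- if `α` and `β` are exteriorly equivalent actions of a finite-index subgroup
`H ≤ G` on a unital C*-algebra `A` (via a cocycle `u`), then the induced `G`-actions on
`Ind_H^G(A, α)` and `Ind_H^G(A, β)` are cocycle conjugate: there are a unital ⋆-algebra
isomorphism `φ` between the induced algebras and a cocycle `v` for `Ind α` such that
`φ ∘ (Ad v_g ∘ (Ind α)_g) = (Ind β)_g ∘ φ`. -/
theorem indAlg_cocycleConjugate {G : Type*} [Group G] (H : Subgroup G) [H.FiniteIndex]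
    {A : Type*} [CStarAlgebra A]
    (α β : H →* (A ≃ₐ[ℂ] A))
    (hαstar : ∀ (h : H) (a : A), α h (star a) = star (α h a))
    (hβstar : ∀ (h : H) (a : A), β h (star a) = star (β h a))
    (u : H → A) (hu_unitary : ∀ h, u h ∈ unitary A)
    (hu_cocycle : ∀ h₁ h₂ : H, u (h₁ * h₂) = u h₁ * α h₁ (u h₂))
    (hβ : ∀ (h : H) (a : A), β h a = u h * α h a * star (u h)) :
    ∃ φ : indAlg H α hαstar ≃⋆ₐ[ℂ] indAlg H β hβstar,
      ∃ v : G → indAlg H α hαstar,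
        (∀ g, v g ∈ unitary (indAlg H α hαstar)) ∧
          (∀ g₁ g₂ : G, v (g₁ * g₂) = v g₁ * indAct H α hαstar g₁ (v g₂)) ∧
          ∀ (g : G) (x : indAlg H α hαstar),
            φ (v g * indAct H α hαstar g x * star (v g)) = indAct H β hβstar g (φ x) := by
  set c : G → A := ccF H u with hc
  have hcm : ∀ (g : G) (h : H), c (g * (h : G)) = u h⁻¹ * α h⁻¹ (c g) :=
    ccF_mul H α u hu_cocycle
  have hu1 : ∀ h : H, star (u h) * u h = 1 := fun h => (Unitary.mem_iff.mp (hu_unitary h)).1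
  have hu2 : ∀ h : H, u h * star (u h) = 1 := fun h => (Unitary.mem_iff.mp (hu_unitary h)).2
  have hu1' : ∀ (h : H) (x : A), star (u h) * (u h * x) = x := by
    intro h x; rw [← mul_assoc, hu1, one_mul]
  have hu2' : ∀ (h : H) (x : A), u h * (star (u h) * x) = x := by
    intro h x; rw [← mul_assoc, hu2, one_mul]
  have hc_unit : ∀ g : G, c g ∈ unitary A := fun g => hu_unitary _
  have hc1 : ∀ g : G, star (c g) * c g = 1 := fun g => hu1 _
  have hc2 : ∀ g : G, c g * star (c g) = 1 := fun g => hu2 _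
  have hc1' : ∀ (g : G) (x : A), star (c g) * (c g * x) = x := fun g x => hu1' _ x
  have hc2' : ∀ (g : G) (x : A), c g * (star (c g) * x) = x := fun g x => hu2' _ x
  have hαstar_inv : ∀ (h : H) (a : A), (α h)⁻¹ (star a) = star ((α h)⁻¹ a) := by
    intro h a
    have := hαstar h⁻¹ a
    rwa [map_inv] at this
  -- the isomorphism φ
  have mem_to : ∀ f : G → A, f ∈ indAlg H α hαstar →
      (fun k => c k * f k * star (c k)) ∈ indAlg H β hβstar := by
    intro f hf g h
    simp only [hcm g h, hf g h, hβ]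
    simp [map_mul, hαstar, hαstar_inv, star_mul, mul_assoc]
  have mem_inv : ∀ f : G → A, f ∈ indAlg H β hβstar →
      (fun k => star (c k) * f k * c k) ∈ indAlg H α hαstar := by
    intro f hf g h
    simp only [hcm g h, hf g h, hβ]
    simp [map_mul, hαstar, hαstar_inv, star_mul, mul_assoc, hu1', hu2']
  let φ : indAlg H α hαstar ≃⋆ₐ[ℂ] indAlg H β hβstar :=
    { toFun := fun f => ⟨fun k => c k * (f : G → A) k * star (c k), mem_to f f.2⟩
      invFun := fun f => ⟨fun k => star (c k) * (f : G → A) k * c k, mem_inv f f.2⟩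
      left_inv := by
        intro f
        apply Subtype.ext
        funext k
        show star (c k) * (c k * (f : G → A) k * star (c k)) * c k = (f : G → A) k
        simp [mul_assoc, hc1, hc2, hc1', hc2']
      right_inv := by
        intro f
        apply Subtype.ext
        funext k
        show c k * (star (c k) * (f : G → A) k * c k) * star (c k) = (f : G → A) k
        simp [mul_assoc, hc1, hc2, hc1', hc2']
      map_mul' := by
        intro f₁ f₂
        apply Subtype.ext
        funext k
        show c k * ((f₁ : G → A) k * (f₂ : G → A) k) * star (c k)
            = (c k * (f₁ : G → A) k * star (c k)) * (c k * (f₂ : G → A) k * star (c k))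
        simp [mul_assoc, hc1, hc2, hc1', hc2']
      map_add' := by
        intro f₁ f₂
        apply Subtype.ext
        funext k
        show c k * ((f₁ : G → A) k + (f₂ : G → A) k) * star (c k)
            = c k * (f₁ : G → A) k * star (c k) + c k * (f₂ : G → A) k * star (c k)
        simp [mul_add, add_mul]
      map_star' := by
        intro f
        apply Subtype.ext
        funext k
        show c k * star ((f : G → A) k) * star (c k)
            = star (c k * (f : G → A) k * star (c k))
        simp [star_mul, mul_assoc]
      map_smul' := by
        intro r f
        apply Subtype.ext
        funext k
        show c k * (r • (f : G → A) k) * star (c k) = r • (c k * (f : G → A) k * star (c k))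
        simp [mul_smul_comm, smul_mul_assoc] }
  -- the cocycle v
  have mem_v : ∀ g : G, (fun k => star (c k) * c (g⁻¹ * k)) ∈ indAlg H α hαstar := by
    intro g k h
    show star (c (k * h)) * c (g⁻¹ * (k * h)) = α h⁻¹ (star (c k) * c (g⁻¹ * k))
    rw [← mul_assoc, hcm k h, hcm (g⁻¹ * k) h]
    simp [star_mul, mul_assoc, hu1', map_mul, hαstar, hαstar_inv]
  refine ⟨φ, fun g => ⟨fun k => star (c k) * c (g⁻¹ * k), mem_v g⟩, ?_, ?_, ?_⟩
  · intro g
    rw [Unitary.mem_iff]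
    constructor
    · apply Subtype.ext
      funext k
      show star (star (c k) * c (g⁻¹ * k)) * (star (c k) * c (g⁻¹ * k)) = 1
      simp [star_mul, mul_assoc, hc1, hc2, hc1', hc2']
    · apply Subtype.ext
      funext k
      show (star (c k) * c (g⁻¹ * k)) * star (star (c k) * c (g⁻¹ * k)) = 1
      simp [star_mul, mul_assoc, hc1, hc2, hc1', hc2']
  · intro g₁ g₂
    apply Subtype.ext
    funext k
    show star (c k) * c ((g₁ * g₂)⁻¹ * k)
        = (star (c k) * c (g₁⁻¹ * k)) * (star (c (g₁⁻¹ * k)) * c (g₂⁻¹ * (g₁⁻¹ * k)))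
    rw [mul_inv_rev, mul_assoc, mul_assoc, hc2']
  · intro g x
    apply Subtype.ext
    funext k
    show c k * ((star (c k) * c (g⁻¹ * k)) * (x : G → A) (g⁻¹ * k)
          * star (star (c k) * c (g⁻¹ * k))) * star (c k)
        = c (g⁻¹ * k) * (x : G → A) (g⁻¹ * k) * star (c (g⁻¹ * k))
    simp [star_mul, mul_assoc, hc1, hc2, hc1', hc2']
end

section
/- Let G be a group, H a subgroup of G of finite index, A a unital complex C*-algebra, and α, β : H → Aut(A) actions with unitaries u_h ∈ A (h ∈ H) satisfying u_{h₁h₂} = u_{h₁} · α_{h₁}(u_{h₂}) and β_h(a) = u_h α_h(a) u_h* for all h, h₁, h₂ ∈ H, a ∈ A. Let σ : G → G be a function with g⁻¹σ(g) ∈ H for all g ∈ G and σ(gh) = σ(g) for all g ∈ G, h ∈ H, and define w : G → A by w(g) = u_{g⁻¹σ(g)}. Then each w(g) is a unitary of A, and for every f ∈ Ind_H^G(A,α), the function g ↦ w(g) f(g) w(g)* belongs to Ind_H^G(A,β). -/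
/-- with `α, β` exteriorly equivalent actions (via a cocycle `u`) of a
finite-index subgroup `H ≤ G` on a unital C*-algebra `A`, a coset section `σ : G → G`
(i.e. `g⁻¹ σ(g) ∈ H` and `σ(g h) = σ(g)` for `h ∈ H`) and `w(g) = u_{g⁻¹ σ(g)}`, each `w(g)`
is a unitary and conjugation by `w` maps `Ind_H^G(A, α)` into `Ind_H^G(A, β)`; membership of
`f` in `Ind_H^G(A, σ')` is expressed by the condition `f (g h) = σ'_{h⁻¹} (f g)`. -/
theorem indAlg_conjugation_maps_ind {G : Type*} [Group G] (H : Subgroup G) [H.FiniteIndex]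
    {A : Type*} [CStarAlgebra A]
    (α β : H →* (A ≃ₐ[ℂ] A))
    (hαstar : ∀ (h : H) (a : A), α h (star a) = star (α h a))
    (hβstar : ∀ (h : H) (a : A), β h (star a) = star (β h a))
    (u : H → A) (hu_unitary : ∀ h, u h ∈ unitary A)
    (hu_cocycle : ∀ h₁ h₂ : H, u (h₁ * h₂) = u h₁ * α h₁ (u h₂))
    (hβ : ∀ (h : H) (a : A), β h a = u h * α h a * star (u h))
    (σ : G → G) (hσ₁ : ∀ g : G, g⁻¹ * σ g ∈ H) (hσ₂ : ∀ (g : G) (h : H), σ (g * h) = σ g)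
    (w : G → A) (hw : ∀ g : G, w g = u ⟨g⁻¹ * σ g, hσ₁ g⟩) :
    (∀ g : G, w g ∈ unitary A) ∧
      ∀ f : G → A, (∀ (g : G) (h : H), f (g * h) = α h⁻¹ (f g)) →
        ∀ (g : G) (h : H),
          w (g * h) * f (g * h) * star (w (g * h)) = β h⁻¹ (w g * f g * star (w g)) := by
  refine ⟨fun g => by rw [hw g]; exact hu_unitary _, fun f hf g h => ?_⟩
  have key : (⟨(g * h : G)⁻¹ * σ (g * h), hσ₁ _⟩ : H) = h⁻¹ * ⟨g⁻¹ * σ g, hσ₁ g⟩ := by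
    ext
    simp [hσ₂ g h, mul_assoc]
  rw [hw, hw g, key, hu_cocycle, hβ, hf g h]
  simp only [star_mul, map_mul, hαstar, mul_assoc]
end

section
/- Let G be a group, H a subgroup of G of finite index, A a unital complex C*-algebra, and α, β : H → Aut(A) actions with unitaries u_h ∈ A (h ∈ H) satisfying u_{h₁h₂} = u_{h₁} · α_{h₁}(u_{h₂}) and β_h(a) = u_h α_h(a) u_h* for all h, h₁, h₂ ∈ H, a ∈ A. Let σ : G → G satisfy g⁻¹σ(g) ∈ H and σ(gh) = σ(g) for all g ∈ G, h ∈ H, and set w(g) = u_{g⁻¹σ(g)}. For g ∈ G define v_g : G → A by v_g(k) = w(k)* · w(g⁻¹k). Then: (i) v_g belongs to Ind_H^G(A,α), i.e. v_g(kh) = α_{h⁻¹}(v_g(k)) for all k ∈ G, h ∈ H; (ii) each v_g(k) is a unitary of A; (iii) the cocycle identity v_{g₁g₂}(k) = v_{g₁}(k) · v_{g₂}(g₁⁻¹k) holds for all g₁, g₂, k ∈ G; and (iv) for all g, k ∈ G and f ∈ Ind_H^G(A,α): w(k) · v_g(k) · f(g⁻¹k) · v_g(k)* · w(k)* = w(g⁻¹k)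 · f(g⁻¹k) · w(g⁻¹k)*. -/
/-- with `α, β` exteriorly equivalent actions (via a cocycle `u`) of a
finite-index subgroup `H ≤ G` on a unital C*-algebra `A`, a coset section `σ : G → G`,
`w(g) = u_{g⁻¹ σ(g)}`, and `v g k = w(k)* w(g⁻¹ k)`, the family `v` satisfies:
(i) `v g ∈ Ind_H^G(A, α)`; (ii) each `v g k` is a unitary; (iii) the cocycle identity
`v (g₁ g₂) k = v g₁ k * v g₂ (g₁⁻¹ k)`; (iv) for every `f ∈ Ind_H^G(A, α)`,
`w(k) v_g(k) f(g⁻¹ k) v_g(k)* w(k)* = w(g⁻¹ k) f(g⁻¹ k) w(g⁻¹ k)*`. -/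
theorem indAlg_cocycle_properties {G : Type*} [Group G] (H : Subgroup G) [H.FiniteIndex]
    {A : Type*} [CStarAlgebra A]
    (α β : H →* (A ≃ₐ[ℂ] A))
    (hαstar : ∀ (h : H) (a : A), α h (star a) = star (α h a))
    (hβstar : ∀ (h : H) (a : A), β h (star a) = star (β h a))
    (u : H → A) (hu_unitary : ∀ h, u h ∈ unitary A)
    (hu_cocycle : ∀ h₁ h₂ : H, u (h₁ * h₂) = u h₁ * α h₁ (u h₂))
    (hβ : ∀ (h : H) (a : A), β h a = u h * α h a * star (u h))
    (σ : G → G) (hσ₁ : ∀ g : G, g⁻¹ * σ g ∈ H) (hσ₂ : ∀ (g : G) (h : H), σ (g * h) = σ g)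
    (w : G → A) (hw : ∀ g : G, w g = u ⟨g⁻¹ * σ g, hσ₁ g⟩)
    (v : G → G → A) (hv : ∀ g k : G, v g k = star (w k) * w (g⁻¹ * k)) :
    (∀ (g k : G) (h : H), v g (k * h) = α h⁻¹ (v g k)) ∧
      (∀ g k : G, v g k ∈ unitary A) ∧
      (∀ g₁ g₂ k : G, v (g₁ * g₂) k = v g₁ k * v g₂ (g₁⁻¹ * k)) ∧
      ∀ (g k : G) (f : G → A), (∀ (g' : G) (h : H), f (g' * h) = α h⁻¹ (f g')) →
        w k * v g k * f (g⁻¹ * k) * star (v g k) * star (w k) =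
          w (g⁻¹ * k) * f (g⁻¹ * k) * star (w (g⁻¹ * k)) := by
  have hwu : ∀ g : G, w g ∈ unitary A := fun g => by rw [hw]; exact hu_unitary _
  have hws : ∀ g : G, star (w g) * w g = 1 :=
    fun g => Unitary.star_mul_self_of_mem (hwu g)
  have hws' : ∀ g : G, w g * star (w g) = 1 :=
    fun g => Unitary.mul_star_self_of_mem (hwu g)
  have hwh : ∀ (k : G) (h : H), w (k * h) = u h⁻¹ * α h⁻¹ (w k) := by
    intro k h
    rw [hw, hw, ← hu_cocycle]
    congr 1
    ext
    simp [hσ₂ k h, mul_assoc]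
  refine ⟨?_, ?_, ?_, ?_⟩
  · intro g k h
    have h2 : g⁻¹ * (k * h) = (g⁻¹ * k) * h := by group
    rw [hv, hv, h2, hwh (g⁻¹ * k) h, hwh k h, star_mul, map_mul, ← hαstar,
      mul_assoc, ← mul_assoc (star (u h⁻¹)),
      Unitary.star_mul_self_of_mem (hu_unitary h⁻¹), one_mul]
  · intro g k
    rw [hv]
    exact mul_mem (Unitary.star_mem (hwu k)) (hwu _)
  · intro g₁ g₂ k
    have h2 : (g₁ * g₂)⁻¹ * k = g₂⁻¹ * (g₁⁻¹ * k) := by group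
    rw [hv, hv, hv, h2]
    conv_rhs => rw [mul_assoc, ← mul_assoc (w (g₁⁻¹ * k)), hws' (g₁⁻¹ * k), one_mul]
  · intro g k f _
    have key : w k * v g k = w (g⁻¹ * k) := by
      rw [hv, ← mul_assoc, hws' k, one_mul]
    have key2 : star (v g k) * star (w k) = star (w (g⁻¹ * k)) := by
      rw [← star_mul, key]
    rw [key, mul_assoc (w (g⁻¹ * k) * f (g⁻¹ * k)), key2, mul_assoc]
end
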